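/- arXiv:1209.3450 — 3 statements merged into one kernel-verified Lean document; each statement's English description precedes it below -/
import Mathlib

section
/- Let H(t) = (at+b)/(ct+d) be a Möbius transformation with a,b,c,d natural numbers. Suppose t₀ > 0 is a fixed point of H (with ct₀ + d ≠ 0) and H is increasing in a neighborhood of t₀. Then H'(t₀) ≤ 1, with equality if and only if H(t) = t for all t. -/
/-!
At a fixed point `t₀` the relation `a t₀ + b = t₀ (c t₀ + d)` rewrites the derivative
`(ad - bc) / (c t₀ + d)²` as `1 - (c t₀² + b) / (t₀ (c t₀ + d))`. With `b, c ≥ 0` and `t₀ > 0`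
the subtracted term is nonnegative, and it vanishes only if `b = c = 0`; the fixed point then
forces `a = d`, so `H` is the identity.
-/

theorem hasDerivAt_mobius {a b c d t : ℝ} (h : c * t + d ≠ 0) :
    HasDerivAt (fun t => (a * t + b) / (c * t + d)) ((a * d - b * c) / (c * t + d) ^ 2) t := by
  have hnum : HasDerivAt (fun t => a * t + b) a t := by
    simpa using ((hasDerivAt_id t).const_mul a).add_const b
  have hden : HasDerivAt (fun t => c * t + d) c t := by
    simpa using ((hasDerivAt_id t).const_mul c).add_const d
  exact (hnum.div hden h).congr_deriv (by ring)

theorem mobius_deriv_eq_one_sub_of_fixed {a b c d t : ℝ} (ht : t ≠ 0) (h : c * t + d ≠ 0)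
    (hfix : (a * t + b) / (c * t + d) = t) :
    (a * d - b * c) / (c * t + d) ^ 2 = 1 - (c * t ^ 2 + b) / (t * (c * t + d)) := by
  rw [div_eq_iff h] at hfix
  field_simp
  linear_combination d * hfix

theorem mobius_deriv_le_one_general (a b c d : ℕ)
    (H : ℝ → ℝ)
    (hH : ∀ t : ℝ, H t = ((a : ℝ) * t + b) / ((c : ℝ) * t + d))
    (t₀ : ℝ) (ht₀ : 0 < t₀) (hden : (c : ℝ) * t₀ + d ≠ 0)
    (hfix : H t₀ = t₀) :
    deriv H t₀ ≤ 1 ∧ (deriv H t₀ = 1 ↔ ∀ t : ℝ, H t = t) := by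
  have hfix' := hH t₀ ▸ hfix
  have hderiv : deriv H t₀ = 1 - (c * t₀ ^ 2 + b) / (t₀ * (c * t₀ + d)) := by
    rw [funext hH, (hasDerivAt_mobius hden).deriv]
    exact mobius_deriv_eq_one_sub_of_fixed ht₀.ne' hden hfix'
  have hdeficit : 0 ≤ (c * t₀ ^ 2 + b : ℝ) / (t₀ * (c * t₀ + d)) := by positivity
  refine ⟨by linarith, fun h1 => ?_, fun hid => by simp [funext hid]⟩
  rw [hderiv, sub_eq_self, div_eq_zero_iff, or_iff_left (mul_ne_zero ht₀.ne' hden)] at h1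
  obtain ⟨hct, hb⟩ := (add_eq_zero_iff_of_nonneg (by positivity) (by positivity)).1 h1
  have hc : (c : ℝ) = 0 := (mul_eq_zero.1 hct).resolve_right (by positivity)
  simp only [hc, hb, zero_mul, zero_add, add_zero] at hden hfix' hH
  have had : (a : ℝ) = d := by
    rw [div_eq_iff hden, mul_comm t₀] at hfix'
    exact mul_right_cancel₀ ht₀.ne' hfix'
  intro t
  rw [hH, had, mul_div_cancel_left₀ t hden]

/-- **Möbius derivative at a positive fixed point.**
Let `H t = (a t + b) / (c t + d)` with `a b c d : ℕ` and `a*d - b*c ≠ 0` (as integers).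
If `t₀ > 0` is a fixed point of `H`, `c*t₀ + d ≠ 0`, and `H` is monotone increasing in a
neighborhood of `t₀`, then `deriv H t₀ ≤ 1`, with equality iff `H` is the identity. -/
theorem mobius_deriv_le_one (a b c d : ℕ)
    (hdet : (a : ℤ) * d - b * c ≠ 0)
    (H : ℝ → ℝ)
    (hH : ∀ t : ℝ, H t = ((a : ℝ) * t + b) / ((c : ℝ) * t + d))
    (t₀ : ℝ) (ht₀ : 0 < t₀) (hden : (c : ℝ) * t₀ + d ≠ 0)
    (hfix : H t₀ = t₀)
    (hmono : ∃ ε > 0, MonotoneOn H (Set.Ioo (t₀ - ε) (t₀ + ε))) :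
    deriv H t₀ ≤ 1 ∧ (deriv H t₀ = 1 ↔ ∀ t : ℝ, H t = t) :=
  mobius_deriv_le_one_general a b c d H hH t₀ ht₀ hden hfix
end

section
/- Define c_n for n ≥ 1 by c_{km+r} = 2^{r-1}·(2^{(k+1)m}-1)/(2^m-1) for r = 1,…,m-1 and c_{km} = 1/2 + (1/2)·(2^{(k+1)m}-1)/(2^m-1), where m ≥ 2 is fixed. Then the generating function satisfies Σ_{n≥1} c_n t^n = 1/((1-2t)(1+t+⋯+t^{m-1})) - 1 as formal power series. -/
/-!
Let `d = invCoeff m` be the coefficient sequence of `((1 - 2X)(1 - X^m))⁻¹`, i.e.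
`d n = ∑_{j ≤ n, m ∣ j} 2^(n-j)`; it is characterised by `d 0 = 1` and the recurrence
`d (n+1) = 2 d n + [m ∣ n+1]`, and the formulas for `c` say exactly `c (n+1) = d (n+1) - d n`.
Hence `1 + ∑ c_n t^n = (1 - t) ∑ d_n t^n`, which is the claimed inverse because
`(1 - t)(1 + t + ⋯ + t^(m-1)) = 1 - t^m`.
-/

open PowerSeries

namespace PowerSeries

theorem one_sub_C_mul_X_pow_mul_mk {R : Type*} [CommRing R] (a : R) (k : ℕ) {f g : ℕ → R}
    (hlow : ∀ n < k, f n = g n) (hstep : ∀ n, f (n + k) = a * f n + g (n + k)) :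
    (1 - C a * X ^ k) * mk f = mk g := by
  ext n
  simp only [sub_mul, one_mul, mul_assoc, map_sub, coeff_C_mul, coeff_X_pow_mul', coeff_mk]
  split_ifs with hkn
  · obtain ⟨j, rfl⟩ := Nat.exists_eq_add_of_le' hkn
    rw [Nat.add_sub_cancel, hstep]
    ring
  · rw [mul_zero, sub_zero, hlow n (by omega)]

theorem one_sub_X_pow_mul_mk_dvd {R : Type*} [CommRing R] {k : ℕ} (hk : 0 < k) :
    (1 - X ^ k : R⟦X⟧) * mk (fun n => if k ∣ n then 1 else 0) = 1 := by
  have h := one_sub_C_mul_X_pow_mul_mk (1 : R) k (f := fun n => if k ∣ n then 1 else 0)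
    (g := fun n => if n = 0 then 1 else 0)
    (fun n hn => by simp [Nat.dvd_iff_mod_eq_zero, Nat.mod_eq_of_lt hn])
    (fun n => by simp [Nat.add_eq_zero_iff, hk.ne'])
  rw [map_one, one_mul] at h
  rw [h]
  ext n
  simp [coeff_one]

theorem inv_eq_of_mul_eq_one {k : Type*} [Field k] {φ ψ : k⟦X⟧} (h : φ * ψ = 1) : ψ⁻¹ = φ :=
  (inv_eq_iff_mul_eq_one (right_ne_zero_of_mul_eq_one (by rw [← map_mul, h, map_one]))).mpr h

end PowerSeries

noncomputable def invCoeff (m n : ℕ) : ℚ :=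
  2 ^ (n % m) * (2 ^ ((n / m + 1) * m) - 1) / (2 ^ m - 1)

theorem two_pow_sub_one_ne_zero {m : ℕ} (hm : 0 < m) : (2 : ℚ) ^ m - 1 ≠ 0 :=
  sub_ne_zero.mpr (one_lt_pow₀ one_lt_two hm.ne').ne'

theorem invCoeff_mul_add {m : ℕ} (k : ℕ) {r : ℕ} (hr : r < m) :
    invCoeff m (k * m + r) = 2 ^ r * (2 ^ ((k + 1) * m) - 1) / (2 ^ m - 1) := by
  have hm : 0 < m := by omega
  rw [invCoeff, add_comm, Nat.add_mul_mod_self_right, Nat.mod_eq_of_lt hr,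
    Nat.add_mul_div_right _ _ hm, Nat.div_eq_of_lt hr, zero_add]

theorem invCoeff_zero {m : ℕ} (hm : 0 < m) : invCoeff m 0 = 1 := by
  simpa [div_self (two_pow_sub_one_ne_zero hm)] using invCoeff_mul_add 0 hm

theorem invCoeff_succ {m : ℕ} (hm : 0 < m) (n : ℕ) :
    invCoeff m (n + 1) = 2 * invCoeff m n + if m ∣ n + 1 then 1 else 0 := by
  obtain ⟨k, r, hr, rfl⟩ : ∃ k r, r < m ∧ n = k * m + r :=
    ⟨n / m, n % m, Nat.mod_lt n hm, (Nat.div_add_mod' n m).symm⟩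
  rw [invCoeff_mul_add k hr, add_assoc]
  rcases (show r + 1 < m ∨ r + 1 = m by omega) with hr1 | rfl
  · have hndvd : ¬ m ∣ k * m + (r + 1) := by
      rw [Nat.dvd_add_right (dvd_mul_left m k)]
      exact Nat.not_dvd_of_pos_of_lt (by omega) hr1
    rw [invCoeff_mul_add k hr1, if_neg hndvd, pow_succ]
    ring
  · have hQ := two_pow_sub_one_ne_zero hm
    rw [if_pos ⟨k + 1, by ring⟩, show k * (r + 1) + (r + 1) = (k + 1) * (r + 1) + 0 by ring,
      invCoeff_mul_add (k + 1) hm]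
    field_simp
    ring

theorem succ_eq_invCoeff_add {m : ℕ} (hm : 0 < m) {c : ℕ → ℚ}
    (hc_r : ∀ k r : ℕ, 1 ≤ r → r ≤ m - 1 →
      c (k * m + r) = 2 ^ (r - 1) * (2 ^ ((k + 1) * m) - 1) / (2 ^ m - 1))
    (hc_0 : ∀ k : ℕ, 1 ≤ k →
      c (k * m) = 1 / 2 + (1 / 2) * (2 ^ ((k + 1) * m) - 1) / (2 ^ m - 1)) (n : ℕ) :
    c (n + 1) = invCoeff m n + if m ∣ n + 1 then 1 else 0 := by
  obtain ⟨k, r, hr, hn⟩ : ∃ k r, r < m ∧ n + 1 = k * m + r :=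
    ⟨(n + 1) / m, (n + 1) % m, Nat.mod_lt _ hm, (Nat.div_add_mod' _ m).symm⟩
  obtain ⟨p, rfl⟩ : ∃ p, m = p + 1 := ⟨m - 1, by omega⟩
  have hQ := two_pow_sub_one_ne_zero hm
  rcases Nat.eq_zero_or_pos r with rfl | hr0
  · obtain ⟨j, rfl⟩ : ∃ j, k = j + 1 := ⟨k - 1, by rcases k with _ | k <;> simp_all⟩
    have hn' : n = j * (p + 1) + p := by linarith
    rw [hn, add_zero, hc_0 _ le_add_self, if_pos (dvd_mul_left _ _), hn',
      invCoeff_mul_add j (Nat.lt_add_one p)]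
    field_simp
    ring
  · obtain ⟨s, rfl⟩ : ∃ s, r = s + 1 := ⟨r - 1, by omega⟩
    have hndvd : ¬ p + 1 ∣ n + 1 := by
      rw [hn, Nat.dvd_add_right (dvd_mul_left _ k)]
      exact Nat.not_dvd_of_pos_of_lt hr0 hr
    rw [if_neg hndvd, hn, hc_r k _ le_add_self (by omega), show n = k * (p + 1) + s by omega,
      invCoeff_mul_add k (by omega)]
    simp

/-- **Generating function of attraction rates (Example 7.8).**  For fixed `m ≥ 2`, the sequence
`c (k*m + r) = 2^(r-1) * (2^((k+1)*m) - 1)/(2^m - 1)` for `1 ≤ r ≤ m - 1`, and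
`c (k*m) = 1/2 + (1/2) * (2^((k+1)*m) - 1)/(2^m - 1)` for `k ≥ 1`, has generating function
`∑_{n ≥ 1} c n t^n = 1/((1 - 2t)(1 + t + ⋯ + t^(m-1))) - 1` in `ℚ⟦t⟧`. -/
theorem generating_function_example
    (m : ℕ) (hm : 2 ≤ m) (c : ℕ → ℚ)
    (hc_r : ∀ k r : ℕ, 1 ≤ r → r ≤ m - 1 →
      c (k * m + r) = 2 ^ (r - 1) * (2 ^ ((k + 1) * m) - 1) / (2 ^ m - 1))
    (hc_0 : ∀ k : ℕ, 1 ≤ k →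
      c (k * m) = 1 / 2 + (1 / 2) * (2 ^ ((k + 1) * m) - 1) / (2 ^ m - 1)) :
    PowerSeries.mk (fun n => if n = 0 then 0 else c n) =
      ((1 - 2 * (X : ℚ⟦X⟧)) * (∑ i ∈ Finset.range m, X ^ i))⁻¹ - 1 := by
  have hm0 : 0 < m := by omega
  have hd : (1 - 2 * X) * mk (invCoeff m) = mk (fun n => if m ∣ n then 1 else 0) := by
    simpa [map_ofNat C 2] using one_sub_C_mul_X_pow_mul_mk (2 : ℚ) 1
      (fun n hn => by simp [Nat.lt_one_iff.mp hn, invCoeff_zero hm0]) (invCoeff_succ hm0)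
  have hc : (1 - X) * mk (invCoeff m) = mk (fun n => if n = 0 then 1 else c n) := by
    simpa using one_sub_C_mul_X_pow_mul_mk (1 : ℚ) 1
      (fun n hn => by simp [Nat.lt_one_iff.mp hn, invCoeff_zero hm0])
      (fun n => by simp [invCoeff_succ hm0, succ_eq_invCoeff_add hm0 hc_r hc_0]; ring)
  have hinv : ((1 - 2 * X) * ∑ i ∈ Finset.range m, X ^ i)⁻¹ =
      mk (fun n => if n = 0 then 1 else c n) := by
    refine inv_eq_of_mul_eq_one ?_
    linear_combination (-(1 - 2 * X) * ∑ i ∈ Finset.range m, X ^ i) * hc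
      + (∑ i ∈ Finset.range m, X ^ i) * (1 - X) * hd
      + mk (fun n => if m ∣ n then (1 : ℚ) else 0) * geom_sum_mul_neg (X : ℚ⟦X⟧) m
      + one_sub_X_pow_mul_mk_dvd (R := ℚ) hm0
  rw [hinv]
  ext (_ | n) <;> simp
end

section
/- (Equicontinuity on a monotone segment) Let f be a dominant superattracting germ with Jacobian J_f. Suppose μ < ν are finite-thinness semivaluations such that f_• is order preserving on [μ,ν], c(f,·) is nondecreasing on [μ,ν], and the Jacobian formula c(f,τ)A(f_•τ) = A(τ) + τ(J_f) holds with A(f_•τ) ≥ 2 for all τ. Then d_{1/A}(f_•ν, f_•μ) := |1/A(f_•ν) - 1/A(f_•μ)| ≤ (1/2)·d_A(ν,μ). -/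
/-- **Equicontinuity on a monotone segment** (real-analytic content of Theorem 2.7, Case 1).
Given reals `Aν ≥ Aμ ≥ 2` (thinnesses of `ν ≥ μ`), attraction rates `cν ≥ cμ ≥ 1`, image
thinnesses `Afν ≥ Afμ ≥ 2` (the order preserving case), `J = ord₀(J_f) ≥ 0`, satisfying the
Jacobian formulas `cν * Afν = Aν + Jν`, `cμ * Afμ = Aμ + Jμ` with `Jν, Jμ ≥ J` and the
Lipschitz bound `|Jν - Jμ| ≤ J * (Aν - Aμ)`, one has
`|1/Afν - 1/Afμ| ≤ (Aν - Aμ) / 2`. -/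
theorem equicontinuity_segment
    (Aν Aμ Afν Afμ cν cμ Jν Jμ J : ℝ)
    (hAμ : 2 ≤ Aμ) (hAνμ : Aμ ≤ Aν)
    (hcμ : 1 ≤ cμ) (hcνμ : cμ ≤ cν)
    (hAfμ : 2 ≤ Afμ) (hAfν : 2 ≤ Afν) (hAf : Afμ ≤ Afν)
    (hJ : 0 ≤ J) (hJν : J ≤ Jν) (hJμ : J ≤ Jμ)
    (hJacν : cν * Afν = Aν + Jν) (hJacμ : cμ * Afμ = Aμ + Jμ)
    (hJlip : |Jν - Jμ| ≤ J * (Aν - Aμ)) :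
    |1 / Afν - 1 / Afμ| ≤ (Aν - Aμ) / 2 := by
  have hμ0 : (0:ℝ) < Afμ := by linarith
  have hν0 : (0:ℝ) < Afν := by linarith
  have h1 : 1 / Afν ≤ 1 / Afμ := one_div_le_one_div_of_le hμ0 hAf
  rw [abs_of_nonpos (by linarith)]
  have hlip := abs_le.1 hJlip
  have key : Afν - Afμ ≤ (Aν - Aμ) * (1 + J) / cν := by
    rw [le_div_iff₀ (by linarith)]
    nlinarith [mul_le_mul_of_nonneg_right hcνμ (le_of_lt hμ0)]
  have heq : 1 / Afμ - 1 / Afν = (Afν - Afμ) / (Afμ * Afν) := by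
    field_simp
  rw [neg_sub, heq, div_le_iff₀ (by positivity)]
  have key2 : (Aν - Aμ) * (1 + J) / cν ≤ (Aν - Aμ) / 2 * (Afν * Afμ) := by
    rw [div_le_iff₀ (by linarith)]
    have h3 : 2 + J ≤ cν * Afμ := by nlinarith [mul_le_mul_of_nonneg_right hcνμ (le_of_lt hμ0)]
    nlinarith [mul_le_mul_of_nonneg_left h3 (by linarith : (0:ℝ) ≤ Aν - Aμ)]
  calc Afν - Afμ ≤ (Aν - Aμ) * (1 + J) / cν := key
    _ ≤ (Aν - Aμ) / 2 * (Afν * Afμ) := key2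
    _ = (Aν - Aμ) / 2 * (Afμ * Afν) := by ring
end
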